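/- The immaculate functions satisfy the right-Pieri rule: for any composition α and positive integer s, 𝔖_α · H_s = Σ_{α ⊂_s β} 𝔖_β in NSym, where the sum is over compositions β with |β| = |α| + s, α_j ≤ β_j for all j ≤ ℓ(α), and ℓ(β) ≤ ℓ(α) + 1. -/

import Mathlib

/-!
For an integer tuple `a = (a₀, …, a_m)` put `W_a(c) = H_{a₀+c₀} H_{a₁+c₁-1} ⋯ H_{a_m+c_m-m}`, so
that `𝔖_a = Σ_{σ ∈ S_{m+1}} sgn σ · W_a(σ)`, and let `a_m = 0`. Summing `𝔖_{a+ε}` over the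
`ε ∈ ℕ^{m+1}` with `|ε| = s` and substituting `c = ε + σ` gives `Σ_c det[r ≤ c_j] · W_a(c)`.
This 0/1 determinant vanishes unless the truncations `min(c_j, m)` are distinct, and `W_a(c)`
vanishes unless `c_m ≥ m`. So only `c = (σ, m + s)` with `σ ∈ S_m` survive, and they add up to
`𝔖_{a'} · H_s`, where `a'` is `a` without its final zero. For `s = 0` this shows that trailing
zeros do not change `𝔖`; for `a = (α, 0)` the tuples `a + ε` are exactly the compositions `β`
with `α ⊂_s β`, padded by a zero when `ℓ(β) = ℓ(α)`.
-/

/-- `NSym`, the free associative `ℚ`-algebra on generators `H₁, H₂, …`,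
modelled as the monoid algebra of the free monoid on positive integers. -/
abbrev NSym := MonoidAlgebra ℚ (FreeMonoid {i : ℕ // 0 < i})

/-- The generator `H_i` (with the convention `H_0 = 1`). -/
noncomputable def Hn : ℕ → NSym := fun i =>
  if h : 0 < i then MonoidAlgebra.of ℚ (FreeMonoid {i : ℕ // 0 < i}) (FreeMonoid.of ⟨i, h⟩)
  else 1

/-- `H` indexed by an integer: `H_m = 0` for `m < 0`. -/
noncomputable def Hz : ℤ → NSym := fun m => if m < 0 then 0 else Hn m.toNat

/-- `H_α = H_{α₁} ⋯ H_{α_m}`. -/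
noncomputable def Hprod (α : List ℕ) : NSym := (α.map Hn).prod

/-- The immaculate function of an integer tuple, via the noncommutative
Jacobi–Trudi formula `𝔖_α = Σ_σ sgn(σ) H_{α₁+σ(1)-1} ⋯ H_{α_m+σ(m)-m}`. -/
noncomputable def imm (α : List ℤ) : NSym :=
  ∑ σ : Equiv.Perm (Fin α.length),
    (Equiv.Perm.sign σ : ℤ) •
      (List.ofFn (fun i => Hz (α.get i + ((σ i : ℕ) : ℤ) - ((i : ℕ) : ℤ)))).prod

/-- The immaculate function of a composition. -/
noncomputable def immN (α : List ℕ) : NSym := imm (α.map (fun a => (a : ℤ)))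

open Finset

noncomputable def jtWord {k : ℕ} (a : Fin k → ℤ) (c : Fin k → ℕ) : NSym :=
  (List.ofFn fun i => Hz (a i + c i - i)).prod

noncomputable def immTuple {k : ℕ} (a : Fin k → ℤ) : NSym :=
  ∑ σ : Equiv.Perm (Fin k), (Equiv.Perm.sign σ : ℤ) • jtWord a fun i => σ i

lemma Hz_of_neg {m : ℤ} (h : m < 0) : Hz m = 0 := if_pos h

lemma Hz_natCast (s : ℕ) : Hz s = Hn s := by simp [Hz]

lemma imm_ofFn {k : ℕ} (f : Fin k → ℤ) : imm (List.ofFn f) = immTuple f := by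
  suffices ∀ (l : List ℤ) (h : l.length = k), (∀ i, l.get i = f (Fin.cast h i)) →
      imm l = immTuple f from
    this _ List.length_ofFn fun i => List.get_ofFn f i
  rintro l rfl hl
  simp only [Fin.cast_eq_self] at hl
  simp only [imm, immTuple, jtWord, hl]

lemma immN_eq_immTuple (l : List ℕ) : immN l = immTuple fun i : Fin l.length => (l[i] : ℤ) := by
  rw [← imm_ofFn, immN]
  congr 1
  induction l <;> simp_all [List.ofFn_getElem_eq_map]

lemma jtWord_add {k : ℕ} (a : Fin k → ℤ) (ε c : Fin k → ℕ) :
    jtWord (fun i => a i + ε i) c = jtWord a (ε + c) := by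
  simp only [jtWord, Pi.add_apply, Nat.cast_add, add_assoc]

lemma jtWord_eq_zero {k : ℕ} {a : Fin k → ℤ} {c : Fin k → ℕ} (i : Fin k) (h : a i + c i < i) :
    jtWord a c = 0 :=
  List.prod_eq_zero (List.mem_ofFn.2 ⟨i, Hz_of_neg (by omega)⟩)

lemma jtWord_snoc {k : ℕ} (a : Fin (k + 1) → ℤ) (c : Fin k → ℕ) (x : ℕ) :
    jtWord a (Fin.snoc c x : Fin (k + 1) → ℕ) =
      jtWord (fun i => a i.castSucc) c * Hz (a (Fin.last k) + x - k) := by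
  rw [jtWord, List.ofFn_succ', List.concat_eq_append, List.prod_append, List.prod_singleton]
  simp [jtWord]

def stairMatrix {k : ℕ} (c : Fin k → ℕ) : Matrix (Fin k) (Fin k) ℤ :=
  Matrix.of fun r j => if (r : ℕ) ≤ c j then 1 else 0

lemma det_stairMatrix {k : ℕ} (c : Fin k → ℕ) :
    (stairMatrix c).det =
      ∑ σ : Equiv.Perm (Fin k), if ∀ i, (σ i : ℕ) ≤ c i then (Equiv.Perm.sign σ : ℤ) else 0 := by
  rw [Matrix.det_apply]
  refine sum_congr rfl fun σ _ => ?_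
  by_cases h : ∀ i, (σ i : ℕ) ≤ c i <;> simp [stairMatrix, prod_boole, h, Units.smul_def]

lemma det_stairMatrix_eq_zero {k : ℕ} {c : Fin k → ℕ} {i j : Fin k} (hij : i ≠ j)
    (h : ∀ r : Fin k, (r : ℕ) ≤ c i ↔ (r : ℕ) ≤ c j) : (stairMatrix c).det = 0 :=
  Matrix.det_zero_of_column_eq hij fun r => by simp [stairMatrix, h r]

lemma det_stairMatrix_val (k : ℕ) : (stairMatrix fun j : Fin k => (j : ℕ)).det = 1 := by
  rw [Matrix.det_of_isUpperTriangular]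
  · simp [stairMatrix]
  · intro i j hij
    simpa [stairMatrix] using hij

lemma det_stairMatrix_snoc {k m : ℕ} (σ : Equiv.Perm (Fin k)) (hm : k ≤ m) :
    (stairMatrix (Fin.snoc (fun i => (σ i : ℕ)) m : Fin (k + 1) → ℕ)).det = Equiv.Perm.sign σ := by
  have hπ : stairMatrix (Fin.snoc (fun i => (σ i : ℕ)) m : Fin (k + 1) → ℕ) =
      (stairMatrix fun j : Fin (k + 1) => (j : ℕ)).submatrix id
        (σ.extendDomain (finSuccAboveEquiv (Fin.last k))) := by
    ext r j
    induction j using Fin.lastCases with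
    | last =>
      have : σ.extendDomain (finSuccAboveEquiv (Fin.last k)) (Fin.last k) = Fin.last k :=
        Equiv.Perm.extendDomain_apply_not_subtype _ _ (by simp)
      simp [stairMatrix, this, Fin.le_last, r.is_le.trans hm]
    | cast i =>
      have := Equiv.Perm.extendDomain_apply_image σ (finSuccAboveEquiv (Fin.last k)) i
      simp only [finSuccAboveEquiv_apply, Fin.succAbove_last] at this
      simp only [stairMatrix, Matrix.of_apply, Matrix.submatrix_apply, id, Fin.snoc_castSucc, this]
      rfl
  rw [hπ, Matrix.det_permute', det_stairMatrix_val, mul_one, Equiv.Perm.sign_extendDomain,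
    Int.cast_id]

lemma exists_perm_of_det_stairMatrix_ne_zero {k : ℕ} {c : Fin (k + 1) → ℕ}
    (hc : (stairMatrix c).det ≠ 0) (hlast : k ≤ c (Fin.last k)) :
    ∃ σ : Equiv.Perm (Fin k), ∀ i, c i.castSucc = σ i := by
  have hlt : ∀ i : Fin k, c i.castSucc < k := fun i => by
    by_contra! hi
    refine hc (det_stairMatrix_eq_zero (Fin.castSucc_ne_last i) fun r => ?_)
    constructor <;> intro <;> omega
  let f : Fin k → Fin k := fun i => ⟨c i.castSucc, hlt i⟩
  have hf : Function.Injective f := fun i j hij => by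
    by_contra hne
    refine hc (det_stairMatrix_eq_zero (Fin.castSucc_injective k |>.ne hne) fun r => ?_)
    rw [show c i.castSucc = c j.castSucc from congrArg Fin.val hij]
  exact ⟨Equiv.ofBijective f hf.bijective_of_finite, fun i => rfl⟩

lemma sum_antidiagonalTuple_add {M : Type*} [AddCommMonoid M] {n : ℕ} (s : ℕ) (v : Fin n → ℕ)
    (F : (Fin n → ℕ) → M) :
    ∑ ε ∈ Nat.antidiagonalTuple n s, F (ε + v) =
      ∑ c ∈ Nat.antidiagonalTuple n (s + ∑ i, v i) with ∀ i, v i ≤ c i, F c := by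
  refine sum_nbij' (· + v) (· - v) (fun ε hε => ?_) (fun c hc => ?_) (fun ε _ => ?_)
    (fun c hc => ?_) fun _ _ => rfl
  · rw [Nat.mem_antidiagonalTuple] at hε
    simp [Nat.mem_antidiagonalTuple, sum_add_distrib, hε]
  · rw [mem_filter, Nat.mem_antidiagonalTuple] at hc
    simp [Nat.mem_antidiagonalTuple, sum_tsub_distrib _ fun i _ => hc.2 i, hc.1]
  · exact add_tsub_cancel_right ε v
  · exact tsub_add_cancel_of_le fun i => (mem_filter.1 hc).2 i

lemma sum_antidiagonalTuple_sum_perm {M : Type*} [AddCommGroup M] {n : ℕ} (s : ℕ)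
    (F : (Fin n → ℕ) → M) :
    ∑ ε ∈ Nat.antidiagonalTuple n s, ∑ σ : Equiv.Perm (Fin n),
        (Equiv.Perm.sign σ : ℤ) • F (ε + fun i => (σ i : ℕ)) =
      ∑ c ∈ Nat.antidiagonalTuple n (s + ∑ i : Fin n, (i : ℕ)), (stairMatrix c).det • F c := by
  have hσ (σ : Equiv.Perm (Fin n)) : ∑ i, (σ i : ℕ) = ∑ i : Fin n, (i : ℕ) :=
    Equiv.sum_comp σ fun i => (i : ℕ)
  rw [Finset.sum_comm]
  simp_rw [← smul_sum, sum_antidiagonalTuple_add, hσ, smul_sum, sum_filter, det_stairMatrix,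
    sum_smul, ite_smul, zero_smul]
  exact Finset.sum_comm

lemma eq_snoc_of_det_smul_jtWord_ne_zero {k s : ℕ} {a : Fin (k + 1) → ℤ}
    (ha : a (Fin.last k) = 0) {c : Fin (k + 1) → ℕ}
    (hc : ∑ i, c i = s + ∑ i : Fin (k + 1), (i : ℕ)) (h : (stairMatrix c).det • jtWord a c ≠ 0) :
    ∃ σ : Equiv.Perm (Fin k), c = Fin.snoc (fun i => (σ i : ℕ)) (k + s) := by
  have hlast : k ≤ c (Fin.last k) := by
    by_contra! hlt
    exact h (by rw [jtWord_eq_zero (Fin.last k) (by simp [ha]; omega), smul_zero])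
  obtain ⟨σ, hσ⟩ := exists_perm_of_det_stairMatrix_ne_zero (left_ne_zero_of_smul h) hlast
  refine ⟨σ, ?_⟩
  have hsum : ∑ i : Fin k, c i.castSucc = ∑ i : Fin k, (i : ℕ) := by
    simp only [hσ]
    exact Equiv.sum_comp σ fun i => (i : ℕ)
  simp only [Fin.sum_univ_castSucc, hsum, Fin.val_castSucc, Fin.val_last] at hc
  rw [← Fin.snoc_init_self c]
  congr 1
  · exact funext hσ
  · omega

theorem sum_antidiagonalTuple_immTuple {k : ℕ} (a : Fin (k + 1) → ℤ) (ha : a (Fin.last k) = 0)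
    (s : ℕ) :
    ∑ ε ∈ Nat.antidiagonalTuple (k + 1) s, immTuple (fun i => a i + ε i) =
      immTuple (fun i => a i.castSucc) * Hn s := by
  let shape (σ : Equiv.Perm (Fin k)) : Fin (k + 1) → ℕ := Fin.snoc (fun i => (σ i : ℕ)) (k + s)
  calc
    _ = ∑ ε ∈ Nat.antidiagonalTuple (k + 1) s, ∑ σ : Equiv.Perm (Fin (k + 1)),
          (Equiv.Perm.sign σ : ℤ) • jtWord a (ε + fun i => (σ i : ℕ)) := by
      simp only [immTuple, jtWord_add]
    _ = ∑ c ∈ Nat.antidiagonalTuple (k + 1) (s + ∑ i : Fin (k + 1), (i : ℕ)),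
          (stairMatrix c).det • jtWord a c := sum_antidiagonalTuple_sum_perm s _
    _ = ∑ σ : Equiv.Perm (Fin k), (stairMatrix (shape σ)).det • jtWord a (shape σ) := by
      refine (sum_of_injOn shape (fun σ _ τ _ h => ?_) (fun σ _ => ?_) (fun c hc hcσ => ?_)
        fun _ _ => rfl).symm
      · ext i
        simpa [shape] using congrFun h i.castSucc
      · simp [shape, Nat.mem_antidiagonalTuple, Fin.sum_univ_castSucc,
          Equiv.sum_comp σ fun i => (i : ℕ)]
        omega
      · by_contra hne
        obtain ⟨σ, rfl⟩ :=
          eq_snoc_of_det_smul_jtWord_ne_zero ha (Nat.mem_antidiagonalTuple.1 hc) hne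
        exact hcσ ⟨σ, mem_univ σ, rfl⟩
    _ = ∑ σ : Equiv.Perm (Fin k), (Equiv.Perm.sign σ : ℤ) •
          (jtWord (fun i => a i.castSucc) (fun i => (σ i : ℕ)) * Hn s) := by
      refine sum_congr rfl fun σ _ => ?_
      rw [det_stairMatrix_snoc σ (Nat.le_add_right k s), jtWord_snoc, ha, ← Hz_natCast]
      congr 3
      push_cast
      ring
    _ = _ := by simp only [immTuple, sum_mul, smul_mul_assoc]

lemma immTuple_of_last_eq_zero {k : ℕ} (a : Fin (k + 1) → ℤ) (ha : a (Fin.last k) = 0) :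
    immTuple a = immTuple fun i => a i.castSucc := by
  simpa [Nat.antidiagonalTuple_zero_right, Hn] using sum_antidiagonalTuple_immTuple a ha 0

lemma immN_eq_immTuple_getD (l : List ℕ) {k : ℕ} (hk : l.length ≤ k) :
    immN l = immTuple fun i : Fin k => (l.getD i 0 : ℤ) := by
  induction k, hk using Nat.le_induction with
  | base =>
    rw [immN_eq_immTuple]
    congr! with i
    rw [List.getD_eq_getElem _ _ i.is_lt, Fin.getElem_fin]
  | succ k hk ih =>
    have hlast : (l.getD (Fin.last k) 0 : ℤ) = 0 := by
      rw [Fin.val_last, List.getD_eq_default _ _ hk, Nat.cast_zero]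
    rw [immTuple_of_last_eq_zero _ hlast, ih]
    rfl

lemma List.sum_getD_fin (l : List ℕ) {k : ℕ} (hk : l.length ≤ k) :
    ∑ i : Fin k, l.getD i 0 = l.sum := by
  induction l generalizing k with
  | nil => simp
  | cons x l ih =>
    cases k with
    | zero => simp at hk
    | succ k =>
      simp only [Fin.sum_univ_succ, Fin.val_zero, Fin.val_succ, List.getD_cons_zero,
        List.getD_cons_succ, List.sum_cons, ih (Nat.le_of_succ_le_succ hk)]

lemma List.filter_ofFn_getD (l : List ℕ) (hl : ∀ x ∈ l, 0 < x) {k : ℕ} (hk : l.length ≤ k) :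
    (List.ofFn fun i : Fin k => l.getD i 0).filter (· ≠ 0) = l := by
  induction l generalizing k with
  | nil => simp
  | cons x l ih =>
    cases k with
    | zero => simp at hk
    | succ k =>
      simp only [List.ofFn_succ, Fin.val_zero, Fin.val_succ, List.getD_cons_zero,
        List.getD_cons_succ, List.filter_cons, decide_eq_true (hl x List.mem_cons_self).ne',
        if_true, ih (fun y hy => hl y (List.mem_cons_of_mem x hy)) (Nat.le_of_succ_le_succ hk)]

lemma List.getD_filter_ofFn {k : ℕ} (b : Fin (k + 1) → ℕ) (hb : ∀ i : Fin k, 0 < b i.castSucc)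
    (i : Fin (k + 1)) : ((List.ofFn b).filter (· ≠ 0)).getD i 0 = b i := by
  have hinit : (List.ofFn fun i : Fin k => b i.castSucc).filter (· ≠ 0) =
      List.ofFn fun i : Fin k => b i.castSucc :=
    List.filter_eq_self.2 fun x hx => by
      obtain ⟨j, rfl⟩ := List.mem_ofFn.1 hx
      simpa using (hb j).ne'
  rw [List.ofFn_succ', List.concat_eq_append, List.filter_append, hinit]
  induction i using Fin.lastCases with
  | last => by_cases h : b (Fin.last k) = 0 <;> simp [h]
  | cast i =>
    have hi : (i.castSucc : ℕ) < (List.ofFn fun i : Fin k => b i.castSucc).length := by simp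
    rw [List.getD_eq_getElem _ _ (by rw [List.length_append]; omega),
      List.getElem_append_left hi, List.getElem_ofFn]
    rfl

def pieriSupersets {n : ℕ} (α : Composition n) (s : ℕ) : Finset (Composition (n + s)) :=
  Finset.univ.filter fun β : Composition (n + s) =>
    (∀ j < α.length, α.blocks.getD j 0 ≤ β.blocks.getD j 0) ∧ β.length ≤ α.length + 1

lemma sum_pieriSupersets {M : Type*} [AddCommMonoid M] {n : ℕ} (α : Composition n) (s : ℕ)
    (g : (Fin (α.length + 1) → ℕ) → M) :
    ∑ β ∈ pieriSupersets α s, g (fun i => β.blocks.getD i 0) =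
      ∑ ε ∈ Nat.antidiagonalTuple (α.length + 1) s, g (fun i => α.blocks.getD i 0 + ε i) := by
  set a : Fin (α.length + 1) → ℕ := fun i => α.blocks.getD i 0
  have ha_sum : ∑ i, a i = n := (List.sum_getD_fin _ (Nat.le_succ _)).trans α.blocks_sum
  have ha_le (β) (hβ : β ∈ pieriSupersets α s) (i : Fin (α.length + 1)) :
      a i ≤ β.blocks.getD i 0 := by
    by_cases hi : (i : ℕ) < α.length
    · exact (mem_filter.1 hβ).2.1 i hi
    · exact (List.getD_eq_default _ _ (not_lt.1 hi)).trans_le (Nat.zero_le _)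
  have hgetD (ε : Fin (α.length + 1) → ℕ) (i : Fin (α.length + 1)) :
      ((List.ofFn fun i => a i + ε i).filter (· ≠ 0)).getD i 0 = a i + ε i := by
    refine List.getD_filter_ofFn _ (fun j => Nat.add_pos_left ?_ _) i
    rw [show a j.castSucc = α.blocks[(j : ℕ)] from List.getD_eq_getElem _ _ j.is_lt]
    exact α.blocks_pos (List.getElem_mem _)
  have hlength (ε : Fin (α.length + 1) → ℕ) :
      ((List.ofFn fun i => a i + ε i).filter (· ≠ 0)).length ≤ α.length + 1 :=
    (List.length_filter_le _ _).trans List.length_ofFn.le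
  refine sum_bij' (fun β _ i => β.blocks.getD i 0 - a i)
    (fun ε hε => ⟨(List.ofFn fun i => a i + ε i).filter (· ≠ 0), fun hx => ?pos, ?sum⟩)
    (fun β hβ => ?hi) (fun ε hε => ?hj) (fun β hβ => ?left) (fun ε hε => ?right)
    fun β hβ => congrArg g (funext fun i => (add_tsub_cancel_of_le (ha_le β hβ i)).symm)
  case pos => exact Nat.pos_of_ne_zero (by simpa using (List.mem_filter.1 hx).2)
  case sum =>
    rw [← List.sum_getD_fin _ (hlength ε)]
    simp only [hgetD, sum_add_distrib, ha_sum, Nat.mem_antidiagonalTuple.1 hε]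
  case hi =>
    rw [Nat.mem_antidiagonalTuple, sum_tsub_distrib _ fun i _ => ha_le β hβ i, ha_sum,
      List.sum_getD_fin _ (mem_filter.1 hβ).2.2, β.blocks_sum, Nat.add_sub_cancel_left]
  case hj =>
    refine mem_filter.2 ⟨mem_univ _, fun j hj => ?_, hlength ε⟩
    have := hgetD ε ⟨j, by omega⟩
    exact Nat.le_add_right _ _ |>.trans_eq this.symm
  case left =>
    refine Composition.ext ?_
    simp only [add_tsub_cancel_of_le (ha_le β hβ _)]
    exact List.filter_ofFn_getD _ (fun x hx => β.blocks_pos hx) (mem_filter.1 hβ).2.2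
  case right =>
    funext i
    simp only [hgetD, add_tsub_cancel_left]

theorem stmt_12_general (n : ℕ) (α : Composition n) (s : ℕ) :
    immN α.blocks * Hn s =
      ∑ β ∈ Finset.univ.filter (fun β : Composition (n + s) =>
          (∀ j < α.length, α.blocks.getD j 0 ≤ β.blocks.getD j 0) ∧
          β.length ≤ α.length + 1),
        immN β.blocks := by
  set a : Fin (α.length + 1) → ℤ := fun i => α.blocks.getD i 0
  have ha : a (Fin.last α.length) = 0 := by
    simp only [a, Fin.val_last, List.getD_eq_default _ _ le_rfl, Nat.cast_zero]
  calc immN α.blocks * Hn s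
      = immTuple (fun i => a i.castSucc) * Hn s := by
        rw [immN_eq_immTuple_getD α.blocks le_rfl]
        rfl
    _ = ∑ ε ∈ Nat.antidiagonalTuple (α.length + 1) s, immTuple fun i => a i + ε i :=
        (sum_antidiagonalTuple_immTuple a ha s).symm
    _ = ∑ ε ∈ Nat.antidiagonalTuple (α.length + 1) s,
          immTuple fun i => ((α.blocks.getD i 0 + ε i : ℕ) : ℤ) := by
        simp only [a, Nat.cast_add]
    _ = ∑ β ∈ pieriSupersets α s, immTuple fun i : Fin (α.length + 1) => (β.blocks.getD i 0 : ℤ) :=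
        (sum_pieriSupersets α s fun b => immTuple fun i => (b i : ℤ)).symm
    _ = _ := sum_congr rfl fun β hβ => (immN_eq_immTuple_getD _ (mem_filter.1 hβ).2.2).symm

/-- The right-Pieri rule: `𝔖_α · H_s = Σ_{α ⊂_s β} 𝔖_β`, the sum over all
compositions `β` of `|α| + s` with `α_j ≤ β_j` for `j ≤ ℓ(α)` and
`ℓ(β) ≤ ℓ(α) + 1`. -/
theorem stmt_12 (n : ℕ) (α : Composition n) (s : ℕ) (hs : 0 < s) :
    immN α.blocks * Hn s =
      ∑ β ∈ Finset.univ.filter (fun β : Composition (n + s) =>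
          (∀ j < α.length, α.blocks.getD j 0 ≤ β.blocks.getD j 0) ∧
          β.length ≤ α.length + 1),
        immN β.blocks :=
  stmt_12_general n α s
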